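/- arXiv:2605.06350 — 8 statements merged into one kernel-verified Lean document; each statement's English description precedes it below -/
import Mathlib

section
/- Suppose I ⊆ (0,1) is an interval on which f(s) > 0 for all s ∈ I and the escalation benefit is weakly decreasing on I, i.e. for all s', s'' ∈ I with s' > s'' one has m_H(s') − m_L(s') ≤ m_H(s'') − m_L(s''). Then the cost-quality curve τ ↦ (C(τ), U(τ)) is concave on I in the chord sense: for all τ₁ < τ₂ < τ₃ in I and every α ∈ (0,1) with C(τ₂) = α·C(τ₁) + (1−α)·C(τ₃), one has U(τ₂) ≥ α·U(τ₁) + (1−α)·U(τ₃). -/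
/-- On an interval `I ⊆ (0,1)` where `f > 0` and the
escalation benefit `mH - mL` is weakly decreasing, the cost-quality curve
`τ ↦ (C τ, U τ)` is concave in the chord sense: for `τ₁ < τ₂ < τ₃` in `I` and
`α ∈ (0,1)` with `C τ₂ = α C τ₁ + (1-α) C τ₃`, one has
`U τ₂ ≥ α U τ₁ + (1-α) U τ₃`. -/
theorem two_model_cascade_chord_concavity
    (f mL mH : ℝ → ℝ) (hf : Continuous f)
    (hf0 : ∀ s ∈ Set.Icc (0:ℝ) 1, 0 ≤ f s)
    (hfint : (∫ s in (0:ℝ)..1, f s) = 1)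
    (hmL : Continuous mL) (hmH : Continuous mH)
    (cL cH : ℝ) (hcL : 0 ≤ cL) (hcH : 0 < cH)
    (C U : ℝ → ℝ)
    (hC : ∀ τ, C τ = cL + cH * ∫ s in (0:ℝ)..τ, f s)
    (hU : ∀ τ, U τ = (∫ s in (0:ℝ)..τ, mH s * f s) + ∫ s in τ..(1:ℝ), mL s * f s)
    (I : Set ℝ) (hIint : I.OrdConnected) (hI : I ⊆ Set.Ioo (0:ℝ) 1)
    (hfpos : ∀ s ∈ I, 0 < f s)
    (hdec : ∀ s' ∈ I, ∀ s'' ∈ I, s'' < s' → mH s' - mL s' ≤ mH s'' - mL s'')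
    (τ₁ τ₂ τ₃ : ℝ) (h₁ : τ₁ ∈ I) (h₂ : τ₂ ∈ I) (h₃ : τ₃ ∈ I)
    (h12 : τ₁ < τ₂) (h23 : τ₂ < τ₃)
    (α : ℝ) (hα : α ∈ Set.Ioo (0:ℝ) 1)
    (hcost : C τ₂ = α * C τ₁ + (1 - α) * C τ₃) :
    α * U τ₁ + (1 - α) * U τ₃ ≤ U τ₂ := by
  obtain ⟨hα0, hα1⟩ := hα
  have hα1' : 0 < 1 - α := by linarith
  -- integrability
  have hif : ∀ a b : ℝ, IntervalIntegrable f MeasureTheory.volume a b :=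
    fun a b => hf.intervalIntegrable a b
  have hig : ∀ a b : ℝ, IntervalIntegrable (fun s => (mH s - mL s) * f s)
      MeasureTheory.volume a b :=
    fun a b => (((hmH.sub hmL)).mul hf).intervalIntegrable a b
  have hiH : ∀ a b : ℝ, IntervalIntegrable (fun s => mH s * f s) MeasureTheory.volume a b :=
    fun a b => (hmH.mul hf).intervalIntegrable a b
  have hiL : ∀ a b : ℝ, IntervalIntegrable (fun s => mL s * f s) MeasureTheory.volume a b :=
    fun a b => (hmL.mul hf).intervalIntegrable a b
  set B := ∫ s in τ₁..τ₂, f s with hB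
  set D := ∫ s in τ₂..τ₃, f s with hD
  -- cost identity gives α B = (1-α) D
  have hsplit2 : (∫ s in (0:ℝ)..τ₂, f s) = (∫ s in (0:ℝ)..τ₁, f s) + B :=
    (intervalIntegral.integral_add_adjacent_intervals (hif 0 τ₁) (hif τ₁ τ₂)).symm
  have hsplit3 : (∫ s in (0:ℝ)..τ₃, f s) = (∫ s in (0:ℝ)..τ₂, f s) + D :=
    (intervalIntegral.integral_add_adjacent_intervals (hif 0 τ₂) (hif τ₂ τ₃)).symm
  have hkey : α * B = (1 - α) * D := by
    have h := hcost
    rw [hC τ₁, hC τ₂, hC τ₃, hsplit3, hsplit2] at h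
    have : cH * (α * B - (1 - α) * D) = 0 := by ring_nf; ring_nf at h; linarith
    have := mul_eq_zero.mp this
    rcases this with h' | h'
    · exact absurd h' (ne_of_gt hcH)
    · linarith
  -- U differences
  have hU21 : U τ₂ - U τ₁ = ∫ s in τ₁..τ₂, (mH s - mL s) * f s := by
    rw [hU τ₁, hU τ₂]
    have e1 : (∫ s in (0:ℝ)..τ₂, mH s * f s)
        = (∫ s in (0:ℝ)..τ₁, mH s * f s) + ∫ s in τ₁..τ₂, mH s * f s :=
      (intervalIntegral.integral_add_adjacent_intervals (hiH 0 τ₁) (hiH τ₁ τ₂)).symm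
    have e2 : (∫ s in τ₁..(1:ℝ), mL s * f s)
        = (∫ s in τ₁..τ₂, mL s * f s) + ∫ s in τ₂..(1:ℝ), mL s * f s :=
      (intervalIntegral.integral_add_adjacent_intervals (hiL τ₁ τ₂) (hiL τ₂ 1)).symm
    have e3 : (∫ s in τ₁..τ₂, (mH s - mL s) * f s)
        = (∫ s in τ₁..τ₂, mH s * f s) - ∫ s in τ₁..τ₂, mL s * f s := by
      rw [← intervalIntegral.integral_sub (hiH τ₁ τ₂) (hiL τ₁ τ₂)]
      congr 1; ext s; ring
    rw [e1, e2, e3]; ring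
  have hU32 : U τ₃ - U τ₂ = ∫ s in τ₂..τ₃, (mH s - mL s) * f s := by
    rw [hU τ₂, hU τ₃]
    have e1 : (∫ s in (0:ℝ)..τ₃, mH s * f s)
        = (∫ s in (0:ℝ)..τ₂, mH s * f s) + ∫ s in τ₂..τ₃, mH s * f s :=
      (intervalIntegral.integral_add_adjacent_intervals (hiH 0 τ₂) (hiH τ₂ τ₃)).symm
    have e2 : (∫ s in τ₂..(1:ℝ), mL s * f s)
        = (∫ s in τ₂..τ₃, mL s * f s) + ∫ s in τ₃..(1:ℝ), mL s * f s :=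
      (intervalIntegral.integral_add_adjacent_intervals (hiL τ₂ τ₃) (hiL τ₃ 1)).symm
    have e3 : (∫ s in τ₂..τ₃, (mH s - mL s) * f s)
        = (∫ s in τ₂..τ₃, mH s * f s) - ∫ s in τ₂..τ₃, mL s * f s := by
      rw [← intervalIntegral.integral_sub (hiH τ₂ τ₃) (hiL τ₂ τ₃)]
      congr 1; ext s; ring
    rw [e1, e2, e3]; ring
  set Δ := mH τ₂ - mL τ₂ with hΔ
  -- subset facts
  have hsub12 : Set.Icc τ₁ τ₂ ⊆ I := hIint.out h₁ h₂
  have hsub23 : Set.Icc τ₂ τ₃ ⊆ I := hIint.out h₂ h₃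
  -- pointwise bounds
  have hlow : Δ * B ≤ ∫ s in τ₁..τ₂, (mH s - mL s) * f s := by
    have : (∫ s in τ₁..τ₂, Δ * f s) ≤ ∫ s in τ₁..τ₂, (mH s - mL s) * f s := by
      apply intervalIntegral.integral_mono_on h12.le
        ((continuous_const.mul hf).intervalIntegrable τ₁ τ₂) (hig τ₁ τ₂)
      intro s hs
      have hsI : s ∈ I := hsub12 hs
      have hfs : 0 ≤ f s := (hfpos s hsI).le
      have : Δ ≤ mH s - mL s := by
        rcases eq_or_lt_of_le hs.2 with h | h
        · rw [h]
        · exact hdec τ₂ h₂ s hsI h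
      exact mul_le_mul_of_nonneg_right this hfs
    rwa [intervalIntegral.integral_const_mul] at this
  have hhigh : (∫ s in τ₂..τ₃, (mH s - mL s) * f s) ≤ Δ * D := by
    have : (∫ s in τ₂..τ₃, (mH s - mL s) * f s) ≤ ∫ s in τ₂..τ₃, Δ * f s := by
      apply intervalIntegral.integral_mono_on h23.le (hig τ₂ τ₃)
        ((continuous_const.mul hf).intervalIntegrable τ₂ τ₃)
      intro s hs
      have hsI : s ∈ I := hsub23 hs
      have hfs : 0 ≤ f s := (hfpos s hsI).le
      have : mH s - mL s ≤ Δ := by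
        rcases eq_or_lt_of_le hs.1 with h | h
        · rw [← h]
        · exact hdec s hsI τ₂ h₂ h
      exact mul_le_mul_of_nonneg_right this hfs
    rwa [intervalIntegral.integral_const_mul] at this
  -- combine
  have k1 : α * (Δ * B) ≤ α * (U τ₂ - U τ₁) := by
    rw [hU21]; exact mul_le_mul_of_nonneg_left hlow hα0.le
  have k2 : (1 - α) * (U τ₃ - U τ₂) ≤ (1 - α) * (Δ * D) := by
    rw [hU32]; exact mul_le_mul_of_nonneg_left hhigh hα1'.le
  have heq : α * (Δ * B) = (1 - α) * (Δ * D) := by linear_combination Δ * hkey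
  nlinarith [k1, k2, heq]
end

section
/- Suppose f(s) > 0 for all s ∈ (0,1), m_H(s) − m_L(s) > 0 for all s ∈ (0,1), and the escalation benefit m_H − m_L is weakly decreasing on (0,1) (s' > s'' implies m_H(s') − m_L(s') ≤ m_H(s'') − m_L(s'')). Define the Pareto frontier U†(B) = sup{ U(τ) : τ ∈ [0,1], C(τ) ≤ B }. Then U† is a concave function on the budget interval [c_L, c_L + c_H]. -/
/-!
Since the cost `C` is continuous and strictly increasing on `[0, 1]` and the quality `U` is
increasing there, the frontier at the budget `C τ` is attained exactly at the threshold `τ`, so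
`U†` is `U` reparametrised by `C`. Its slope between the budgets `C τ₁ < C τ₂` is the
`f`-weighted average of the escalation benefit `mH - mL` over `(τ₁, τ₂)`, divided by `cH`; as the
benefit is decreasing, these averages decrease as the interval moves right, which is concavity.
-/

open Set MeasureTheory intervalIntegral

theorem concaveOn_Icc_of_slope_anti_along {φ ψ V : ℝ → ℝ} {a b : ℝ} (hab : a ≤ b)
    (hφc : ContinuousOn φ (Icc a b)) (hφ : StrictMonoOn φ (Icc a b))
    (hV : ∀ τ ∈ Icc a b, V (φ τ) = ψ τ)
    (hslope : ∀ τ₁ τ₂ τ₃, a ≤ τ₁ → τ₁ < τ₂ → τ₂ < τ₃ → τ₃ ≤ b →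
      (ψ τ₃ - ψ τ₂) / (φ τ₃ - φ τ₂) ≤ (ψ τ₂ - ψ τ₁) / (φ τ₂ - φ τ₁)) :
    ConcaveOn ℝ (Icc (φ a) (φ b)) V := by
  refine concaveOn_of_slope_anti_adjacent (convex_Icc _ _) fun {x y z} hx hz hxy hyz => ?_
  have hy : y ∈ Icc (φ a) (φ b) := ⟨hx.1.trans hxy.le, hyz.le.trans hz.2⟩
  obtain ⟨τ₁, hτ₁, rfl⟩ := intermediate_value_Icc hab hφc hx
  obtain ⟨τ₂, hτ₂, rfl⟩ := intermediate_value_Icc hab hφc hy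
  obtain ⟨τ₃, hτ₃, rfl⟩ := intermediate_value_Icc hab hφc hz
  rw [hV τ₁ hτ₁, hV τ₂ hτ₂, hV τ₃ hτ₃]
  exact hslope τ₁ τ₂ τ₃ hτ₁.1 ((hφ.lt_iff_lt hτ₁ hτ₂).1 hxy) ((hφ.lt_iff_lt hτ₂ hτ₃).1 hyz) hτ₃.2

theorem isGreatest_image_le_of_strictMonoOn {α β γ : Type*} [LinearOrder α] [Preorder β]
    [Preorder γ] {s : Set α} {C : α → β} {U : α → γ} (hC : StrictMonoOn C s)
    (hU : MonotoneOn U s) {τ : α} (hτ : τ ∈ s) :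
    IsGreatest {u | ∃ τ' ∈ s, C τ' ≤ C τ ∧ u = U τ'} (U τ) :=
  ⟨⟨τ, hτ, le_rfl, rfl⟩, by
    rintro _ ⟨τ', hτ', hle, rfl⟩
    exact hU hτ' hτ ((hC.le_iff_le hτ' hτ).1 hle)⟩

section WeightedAverage

variable {f g : ℝ → ℝ} {a b k : ℝ}

theorem integral_mul_le_mul_integral (hab : a ≤ b) (hf : IntervalIntegrable f volume a b)
    (hgf : IntervalIntegrable (fun s => g s * f s) volume a b)
    (hf0 : ∀ s ∈ Ioo a b, 0 ≤ f s) (hg : ∀ s ∈ Ioo a b, g s ≤ k) :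
    ∫ s in a..b, g s * f s ≤ k * ∫ s in a..b, f s := by
  rw [← intervalIntegral.integral_const_mul]
  exact integral_mono_on_of_le_Ioo hab hgf (hf.const_mul k)
    fun s hs => mul_le_mul_of_nonneg_right (hg s hs) (hf0 s hs)

theorem mul_integral_le_integral_mul (hab : a ≤ b) (hf : IntervalIntegrable f volume a b)
    (hgf : IntervalIntegrable (fun s => g s * f s) volume a b)
    (hf0 : ∀ s ∈ Ioo a b, 0 ≤ f s) (hg : ∀ s ∈ Ioo a b, k ≤ g s) :
    k * ∫ s in a..b, f s ≤ ∫ s in a..b, g s * f s := by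
  rw [← intervalIntegral.integral_const_mul]
  exact integral_mono_on_of_le_Ioo hab (hf.const_mul k) hgf
    fun s hs => mul_le_mul_of_nonneg_right (hg s hs) (hf0 s hs)

end WeightedAverage

noncomputable def cascadeCost (f : ℝ → ℝ) (cL cH τ : ℝ) : ℝ :=
  cL + cH * ∫ s in (0:ℝ)..τ, f s

noncomputable def cascadeQuality (f mL mH : ℝ → ℝ) (τ : ℝ) : ℝ :=
  (∫ s in (0:ℝ)..τ, mH s * f s) + ∫ s in τ..(1:ℝ), mL s * f s

section Cascade

variable {f mL mH : ℝ → ℝ} {cL cH a b k : ℝ}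

theorem cascadeCost_zero : cascadeCost f cL cH 0 = cL := by
  simp [cascadeCost]

theorem cascadeCost_one (hfint : ∫ s in (0:ℝ)..1, f s = 1) : cascadeCost f cL cH 1 = cL + cH := by
  rw [cascadeCost, hfint, mul_one]

theorem continuous_cascadeCost (hf : Continuous f) : Continuous (cascadeCost f cL cH) :=
  continuous_const.add <| continuous_const.mul <|
    continuous_primitive (fun _ _ => hf.intervalIntegrable _ _) 0

theorem cascadeCost_sub (hf : Continuous f) :
    cascadeCost f cL cH b - cascadeCost f cL cH a = cH * ∫ s in a..b, f s := by
  rw [cascadeCost, cascadeCost, add_sub_add_left_eq_sub, ← mul_sub,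
    integral_interval_sub_left (hf.intervalIntegrable _ _) (hf.intervalIntegrable _ _)]

theorem cascadeQuality_sub (hf : Continuous f) (hmL : Continuous mL) (hmH : Continuous mH) :
    cascadeQuality f mL mH b - cascadeQuality f mL mH a = ∫ s in a..b, (mH s - mL s) * f s := by
  have hH : ∀ x y, IntervalIntegrable (fun s => mH s * f s) volume x y :=
    fun x y => (hmH.mul hf).intervalIntegrable x y
  have hL : ∀ x y, IntervalIntegrable (fun s => mL s * f s) volume x y :=
    fun x y => (hmL.mul hf).intervalIntegrable x y
  simp only [sub_mul]
  rw [integral_sub (hH a b) (hL a b), cascadeQuality, cascadeQuality,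
    ← integral_add_adjacent_intervals (hH 0 a) (hH a b),
    ← integral_add_adjacent_intervals (hL a b) (hL b 1)]
  ring

theorem strictMonoOn_cascadeCost (hf : Continuous f) (hcH : 0 < cH)
    (hfpos : ∀ s ∈ Ioo a b, 0 < f s) : StrictMonoOn (cascadeCost f cL cH) (Icc a b) := by
  intro x hx y hy hxy
  have hpos : 0 < ∫ s in x..y, f s := intervalIntegral_pos_of_pos_on (hf.intervalIntegrable _ _)
    (fun s hs => hfpos s ⟨hx.1.trans_lt hs.1, hs.2.trans_le hy.2⟩) hxy
  have hdiff := cascadeCost_sub (cL := cL) (cH := cH) (a := x) (b := y) hf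
  nlinarith

theorem monotoneOn_cascadeQuality (hf : Continuous f) (hmL : Continuous mL)
    (hmH : Continuous mH) (hf0 : ∀ s ∈ Ioo a b, 0 ≤ f s) (hdom : ∀ s ∈ Ioo a b, 0 ≤ mH s - mL s) :
    MonotoneOn (cascadeQuality f mL mH) (Icc a b) := by
  intro x hx y hy hxy
  have hIoo : Ioo x y ⊆ Ioo a b := Ioo_subset_Ioo hx.1 hy.2
  rw [← sub_nonneg, cascadeQuality_sub hf hmL hmH]
  simpa using mul_integral_le_integral_mul (k := 0) hxy (hf.intervalIntegrable _ _)
    (((hmH.sub hmL).mul hf).intervalIntegrable _ _) (fun s hs => hf0 s (hIoo hs))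
    (fun s hs => hdom s (hIoo hs))

theorem cascade_slope_le_of_le_on_Ioo (hf : Continuous f) (hmL : Continuous mL)
    (hmH : Continuous mH) (hcH : 0 < cH) (hab : a < b) (hfpos : ∀ s ∈ Ioo a b, 0 < f s)
    (hk : ∀ s ∈ Ioo a b, mH s - mL s ≤ k) :
    (cascadeQuality f mL mH b - cascadeQuality f mL mH a) /
      (cascadeCost f cL cH b - cascadeCost f cL cH a) ≤ k / cH := by
  have hI : 0 < ∫ s in a..b, f s :=
    intervalIntegral_pos_of_pos_on (hf.intervalIntegrable _ _) hfpos hab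
  have hmean := integral_mul_le_mul_integral hab.le (hf.intervalIntegrable _ _)
    (((hmH.sub hmL).mul hf).intervalIntegrable _ _) (fun s hs => (hfpos s hs).le) hk
  rw [cascadeQuality_sub hf hmL hmH, cascadeCost_sub hf, div_le_div_iff₀ (by positivity) hcH]
  calc (∫ s in a..b, (mH s - mL s) * f s) * cH ≤ (k * ∫ s in a..b, f s) * cH :=
        mul_le_mul_of_nonneg_right hmean hcH.le
    _ = k * (cH * ∫ s in a..b, f s) := by ring

theorem le_cascade_slope_of_le_on_Ioo (hf : Continuous f) (hmL : Continuous mL)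
    (hmH : Continuous mH) (hcH : 0 < cH) (hab : a < b) (hfpos : ∀ s ∈ Ioo a b, 0 < f s)
    (hk : ∀ s ∈ Ioo a b, k ≤ mH s - mL s) :
    k / cH ≤ (cascadeQuality f mL mH b - cascadeQuality f mL mH a) /
      (cascadeCost f cL cH b - cascadeCost f cL cH a) := by
  have hI : 0 < ∫ s in a..b, f s :=
    intervalIntegral_pos_of_pos_on (hf.intervalIntegrable _ _) hfpos hab
  have hmean := mul_integral_le_integral_mul hab.le (hf.intervalIntegrable _ _)
    (((hmH.sub hmL).mul hf).intervalIntegrable _ _) (fun s hs => (hfpos s hs).le) hk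
  rw [cascadeQuality_sub hf hmL hmH, cascadeCost_sub hf, div_le_div_iff₀ hcH (by positivity)]
  calc k * (cH * ∫ s in a..b, f s) = (k * ∫ s in a..b, f s) * cH := by ring
    _ ≤ (∫ s in a..b, (mH s - mL s) * f s) * cH := mul_le_mul_of_nonneg_right hmean hcH.le

end Cascade

theorem two_model_cascade_pareto_frontier_concave_general
    (f mL mH : ℝ → ℝ) (hf : Continuous f)
    (hfint : (∫ s in (0:ℝ)..1, f s) = 1)
    (hmL : Continuous mL) (hmH : Continuous mH)
    (cL cH : ℝ) (hcH : 0 < cH)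
    (C U : ℝ → ℝ)
    (hC : ∀ τ, C τ = cL + cH * ∫ s in (0:ℝ)..τ, f s)
    (hU : ∀ τ, U τ = (∫ s in (0:ℝ)..τ, mH s * f s) + ∫ s in τ..(1:ℝ), mL s * f s)
    (hfpos : ∀ s ∈ Set.Ioo (0:ℝ) 1, 0 < f s)
    (hdom : ∀ s ∈ Set.Ioo (0:ℝ) 1, 0 < mH s - mL s)
    (hdec : ∀ s' ∈ Set.Ioo (0:ℝ) 1, ∀ s'' ∈ Set.Ioo (0:ℝ) 1, s'' < s' →
      mH s' - mL s' ≤ mH s'' - mL s'')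
    (Udag : ℝ → ℝ)
    (hUdag : ∀ B, Udag B = sSup {u : ℝ | ∃ τ ∈ Set.Icc (0:ℝ) 1, C τ ≤ B ∧ u = U τ}) :
    ConcaveOn ℝ (Set.Icc cL (cL + cH)) Udag := by
  obtain rfl : C = cascadeCost f cL cH := funext hC
  obtain rfl : U = cascadeQuality f mL mH := funext hU
  have hCmono : StrictMonoOn (cascadeCost f cL cH) (Icc 0 1) :=
    strictMonoOn_cascadeCost hf hcH hfpos
  have hUmono : MonotoneOn (cascadeQuality f mL mH) (Icc 0 1) :=
    monotoneOn_cascadeQuality hf hmL hmH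
      (fun s hs => (hfpos s hs).le) (fun s hs => (hdom s hs).le)
  have hfrontier :
      ∀ τ ∈ Icc (0:ℝ) 1, Udag (cascadeCost f cL cH τ) = cascadeQuality f mL mH τ := fun τ hτ => by
    rw [hUdag, (isGreatest_image_le_of_strictMonoOn hCmono hUmono hτ).csSup_eq]
  have hconcave := concaveOn_Icc_of_slope_anti_along zero_le_one
    (continuous_cascadeCost hf).continuousOn hCmono hfrontier
    fun τ₁ τ₂ τ₃ h₁ h₁₂ h₂₃ h₃ => by
      have hτ₂ : τ₂ ∈ Ioo (0:ℝ) 1 := ⟨h₁.trans_lt h₁₂, h₂₃.trans_le h₃⟩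
      exact (cascade_slope_le_of_le_on_Ioo hf hmL hmH hcH h₂₃
          (fun s hs => hfpos s ⟨hτ₂.1.trans hs.1, hs.2.trans_le h₃⟩)
          (fun s hs => hdec s ⟨hτ₂.1.trans hs.1, hs.2.trans_le h₃⟩ τ₂ hτ₂ hs.1)).trans
        (le_cascade_slope_of_le_on_Ioo hf hmL hmH hcH h₁₂
          (fun s hs => hfpos s ⟨h₁.trans_lt hs.1, hs.2.trans hτ₂.2⟩)
          (fun s hs => hdec τ₂ hτ₂ s ⟨h₁.trans_lt hs.1, hs.2.trans hτ₂.2⟩ hs.2))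
  rwa [cascadeCost_zero, cascadeCost_one hfint] at hconcave

/-- If `f > 0` on `(0,1)`, the escalation benefit `mH - mL`
is positive and weakly decreasing on `(0,1)`, then the Pareto frontier
`U†(B) = sup { U τ : τ ∈ [0,1], C τ ≤ B }` is concave on the budget interval
`[cL, cL + cH]`. -/
theorem two_model_cascade_pareto_frontier_concave
    (f mL mH : ℝ → ℝ) (hf : Continuous f)
    (hf0 : ∀ s ∈ Set.Icc (0:ℝ) 1, 0 ≤ f s)
    (hfint : (∫ s in (0:ℝ)..1, f s) = 1)
    (hmL : Continuous mL) (hmH : Continuous mH)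
    (cL cH : ℝ) (hcL : 0 ≤ cL) (hcH : 0 < cH)
    (C U : ℝ → ℝ)
    (hC : ∀ τ, C τ = cL + cH * ∫ s in (0:ℝ)..τ, f s)
    (hU : ∀ τ, U τ = (∫ s in (0:ℝ)..τ, mH s * f s) + ∫ s in τ..(1:ℝ), mL s * f s)
    (hfpos : ∀ s ∈ Set.Ioo (0:ℝ) 1, 0 < f s)
    (hdom : ∀ s ∈ Set.Ioo (0:ℝ) 1, 0 < mH s - mL s)
    (hdec : ∀ s' ∈ Set.Ioo (0:ℝ) 1, ∀ s'' ∈ Set.Ioo (0:ℝ) 1, s'' < s' →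
      mH s' - mL s' ≤ mH s'' - mL s'')
    (Udag : ℝ → ℝ)
    (hUdag : ∀ B, Udag B = sSup {u : ℝ | ∃ τ ∈ Set.Icc (0:ℝ) 1, C τ ≤ B ∧ u = U τ}) :
    ConcaveOn ℝ (Set.Icc cL (cL + cH)) Udag :=
  two_model_cascade_pareto_frontier_concave_general f mL mH hf hfint hmL hmH cL cH hcH C U hC hU
    hfpos hdom hdec Udag hUdag
end

section
/- Suppose I ⊆ (0,1) is an open interval with f(s) > 0 for all s ∈ I. Then C restricted to I is a strictly increasing continuous bijection onto the open interval C(I), and the cost-parameterized quality g := U ∘ (C|_I)⁻¹ is differentiable on C(I) with slope g'(C(τ)) = (m_H(τ) − m_L(τ)) / c_H for every τ ∈ I; that is, the slope of the cost-quality frontier at the point with threshold τ equals the escalation benefit at τ divided by the expensive model's expected cost. -/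
/-!
By the fundamental theorem of calculus, `C' = c_H f` and `U' = (m_H - m_L) f`. Since `f > 0` on
`I`, `C` is strictly increasing there and, by the inverse function theorem, locally invertible
near each `τ ∈ I`; the chain rule then gives the frontier slope `U' / C'`, in which `f` cancels.
-/

open Filter Topology

theorem hasStrictDerivAt_integral_add_integral {φ ψ : ℝ → ℝ} (hφ : Continuous φ)
    (hψ : Continuous ψ) (a b τ : ℝ) :
    HasStrictDerivAt (fun t => (∫ s in a..t, φ s) + ∫ s in t..b, ψ s) (φ τ - ψ τ) τ := by
  have h := (hφ.integral_hasStrictDerivAt a τ).sub (hψ.integral_hasStrictDerivAt b τ)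
  refine h.congr_of_eventuallyEq (Eventually.of_forall fun t => ?_)
  rw [Pi.sub_apply, intervalIntegral.integral_symm t b, sub_neg_eq_add]

theorem HasStrictDerivAt.hasDerivAt_of_comp_eventuallyEq {𝕜 : Type*} [NontriviallyNormedField 𝕜]
    [CompleteSpace 𝕜] {C U g : 𝕜 → 𝕜} {C' U' τ : 𝕜} (hC : HasStrictDerivAt C C' τ)
    (hC' : C' ≠ 0) (hU : HasDerivAt U U' τ) (hg : ∀ᶠ t in 𝓝 τ, g (C t) = U t) :
    HasDerivAt g (U' / C') (C τ) := by
  set φ := hC.localInverse C C' τ hC'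
  have hφ : HasStrictDerivAt φ C'⁻¹ (C τ) := hC.to_localInverse hC'
  have hφC : φ (C τ) = τ := (hC.eventually_left_inverse hC').self_of_nhds
  have hg_φ : ∀ᶠ y in 𝓝 (C τ), g (C (φ y)) = U (φ y) :=
    hφ.hasDerivAt.continuousAt.tendsto.eventually (hφC.symm ▸ hg)
  have hgU : g =ᶠ[𝓝 (C τ)] U ∘ φ := by
    filter_upwards [hg_φ, hC.eventually_right_inverse hC'] with y hy hCφ
    rwa [hCφ] at hy
  rw [div_eq_mul_inv]
  exact ((hφC.symm ▸ hU).comp (C τ) hφ.hasDerivAt).congr_of_eventuallyEq hgU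

theorem two_model_cascade_frontier_slope_general
    (f mL mH : ℝ → ℝ) (hf : Continuous f)
    (hmL : Continuous mL) (hmH : Continuous mH)
    (cL cH : ℝ) (hcH : 0 < cH)
    (C U : ℝ → ℝ)
    (hC : ∀ τ, C τ = cL + cH * ∫ s in (0:ℝ)..τ, f s)
    (hU : ∀ τ, U τ = (∫ s in (0:ℝ)..τ, mH s * f s) + ∫ s in τ..(1:ℝ), mL s * f s)
    (a b : ℝ)
    (hfpos : ∀ s ∈ Set.Ioo a b, 0 < f s) :
    StrictMonoOn C (Set.Ioo a b) ∧
    ContinuousOn C (Set.Ioo a b) ∧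
    Set.BijOn C (Set.Ioo a b) (C '' Set.Ioo a b) ∧
    ∀ g : ℝ → ℝ, (∀ τ ∈ Set.Ioo a b, g (C τ) = U τ) →
      ∀ τ ∈ Set.Ioo a b, HasDerivAt g ((mH τ - mL τ) / cH) (C τ) := by
  obtain rfl : C = _ := funext hC
  obtain rfl : U = _ := funext hU
  have hCd τ : HasStrictDerivAt (fun t => cL + cH * ∫ s in (0:ℝ)..t, f s) (cH * f τ) τ :=
    ((hf.integral_hasStrictDerivAt 0 τ).const_mul cH).const_add cL
  have hUd τ := hasStrictDerivAt_integral_add_integral (hmH.mul hf) (hmL.mul hf) 0 1 τ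
  have hCc : Continuous fun t => cL + cH * ∫ s in (0:ℝ)..t, f s :=
    continuous_iff_continuousAt.2 fun τ => (hCd τ).hasDerivAt.continuousAt
  have hmono : StrictMonoOn (fun t => cL + cH * ∫ s in (0:ℝ)..t, f s) (Set.Ioo a b) :=
    strictMonoOn_of_hasDerivWithinAt_pos (convex_Ioo a b) hCc.continuousOn
      (fun τ _ => (hCd τ).hasDerivAt.hasDerivWithinAt)
      (fun τ hτ => mul_pos hcH (hfpos τ (interior_subset hτ)))
  refine ⟨hmono, hCc.continuousOn, hmono.injOn.bijOn_image, fun g hg τ hτ => ?_⟩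
  have hfτ := hfpos τ hτ
  have hslope := (hCd τ).hasDerivAt_of_comp_eventuallyEq (by positivity) (hUd τ).hasDerivAt
    (eventually_of_mem (isOpen_Ioo.mem_nhds hτ) hg)
  rwa [Pi.mul_apply, Pi.mul_apply, ← sub_mul, mul_div_mul_right _ _ hfτ.ne'] at hslope

/-- On an open interval `I = (a,b) ⊆ (0,1)` with `f > 0`, the
cost `C` restricted to `I` is a strictly increasing continuous bijection onto
its image `C '' I`, and any cost-parameterized quality `g` with `g ∘ C = U` on
`I` (i.e. `g = U ∘ (C|_I)⁻¹` on `C '' I`) is differentiable at every point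
`C τ`, `τ ∈ I`, with slope `(mH τ - mL τ) / cH`. -/
theorem two_model_cascade_frontier_slope
    (f mL mH : ℝ → ℝ) (hf : Continuous f)
    (hf0 : ∀ s ∈ Set.Icc (0:ℝ) 1, 0 ≤ f s)
    (hfint : (∫ s in (0:ℝ)..1, f s) = 1)
    (hmL : Continuous mL) (hmH : Continuous mH)
    (cL cH : ℝ) (hcL : 0 ≤ cL) (hcH : 0 < cH)
    (C U : ℝ → ℝ)
    (hC : ∀ τ, C τ = cL + cH * ∫ s in (0:ℝ)..τ, f s)
    (hU : ∀ τ, U τ = (∫ s in (0:ℝ)..τ, mH s * f s) + ∫ s in τ..(1:ℝ), mL s * f s)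
    (a b : ℝ) (hab : a < b) (hI : Set.Ioo a b ⊆ Set.Ioo (0:ℝ) 1)
    (hfpos : ∀ s ∈ Set.Ioo a b, 0 < f s) :
    StrictMonoOn C (Set.Ioo a b) ∧
    ContinuousOn C (Set.Ioo a b) ∧
    Set.BijOn C (Set.Ioo a b) (C '' Set.Ioo a b) ∧
    ∀ g : ℝ → ℝ, (∀ τ ∈ Set.Ioo a b, g (C τ) = U τ) →
      ∀ τ ∈ Set.Ioo a b, HasDerivAt g ((mH τ - mL τ) / cH) (C τ) :=
  two_model_cascade_frontier_slope_general f mL mH hf hmL hmH cL cH hcH C U hC hU a b hfpos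
end

section
/- Suppose f(s) > 0 and m_H(s) − m_L(s) > 0 for all s ∈ (0,1). Define the quality-constrained value function V_P1(Q) = inf{ C(τ) : τ ∈ [0,1], U(τ) ≥ Q }. Then for every τ* ∈ (0,1), V_P1 is differentiable at the quality level Q = U(τ*) with derivative V_P1'(U(τ*)) = c_H / (m_H(τ*) − m_L(τ*)); that is, the shadow price of the quality constraint equals the expensive model's cost divided by the escalation benefit at the optimal threshold. -/
/-- If `f > 0` and `mH - mL > 0` on `(0,1)`, the
quality-constrained value function `V_P1(Q) = inf { C τ : τ ∈ [0,1], U τ ≥ Q }`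
is differentiable at `Q = U τ*` for every `τ* ∈ (0,1)`, with derivative
`cH / (mH τ* - mL τ*)`. -/
theorem two_model_cascade_P1_shadow_price
    (f mL mH : ℝ → ℝ) (hf : Continuous f)
    (hf0 : ∀ s ∈ Set.Icc (0:ℝ) 1, 0 ≤ f s)
    (hfint : (∫ s in (0:ℝ)..1, f s) = 1)
    (hmL : Continuous mL) (hmH : Continuous mH)
    (cL cH : ℝ) (hcL : 0 ≤ cL) (hcH : 0 < cH)
    (C U : ℝ → ℝ)
    (hC : ∀ τ, C τ = cL + cH * ∫ s in (0:ℝ)..τ, f s)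
    (hU : ∀ τ, U τ = (∫ s in (0:ℝ)..τ, mH s * f s) + ∫ s in τ..(1:ℝ), mL s * f s)
    (hfpos : ∀ s ∈ Set.Ioo (0:ℝ) 1, 0 < f s)
    (hdom : ∀ s ∈ Set.Ioo (0:ℝ) 1, 0 < mH s - mL s)
    (VP1 : ℝ → ℝ)
    (hVP1 : ∀ Q, VP1 Q = sInf {c : ℝ | ∃ τ ∈ Set.Icc (0:ℝ) 1, Q ≤ U τ ∧ c = C τ})
    (τstar : ℝ) (hτstar : τstar ∈ Set.Ioo (0:ℝ) 1) :
    HasDerivAt VP1 (cH / (mH τstar - mL τstar)) (U τstar) := by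
  obtain ⟨hτ0, hτ1⟩ := hτstar
  have hd : 0 < mH τstar - mL τstar := hdom τstar ⟨hτ0, hτ1⟩
  have hfτ : 0 < f τstar := hfpos τstar ⟨hτ0, hτ1⟩
  have hg : Continuous fun s => (mH s - mL s) * f s := (hmH.sub hmL).mul hf
  have hmLf : Continuous fun s => mL s * f s := hmL.mul hf
  have hmHf : Continuous fun s => mH s * f s := hmH.mul hf
  set K := ∫ s in (0:ℝ)..1, mL s * f s with hK
  -- rewrite U as a primitive plus a constant
  have hUeq : U = fun τ => (∫ s in (0:ℝ)..τ, (mH s - mL s) * f s) + K := by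
    funext τ
    rw [hU]
    have h1 : (∫ s in (0:ℝ)..τ, mL s * f s) + (∫ s in τ..(1:ℝ), mL s * f s) = K :=
      intervalIntegral.integral_add_adjacent_intervals (hmLf.intervalIntegrable _ _)
        (hmLf.intervalIntegrable _ _)
    have h2 : (∫ s in (0:ℝ)..τ, (mH s - mL s) * f s)
        = (∫ s in (0:ℝ)..τ, mH s * f s) - ∫ s in (0:ℝ)..τ, mL s * f s := by
      rw [← intervalIntegral.integral_sub (hmHf.intervalIntegrable _ _)
        (hmLf.intervalIntegrable _ _)]
      congr 1
      funext s
      ring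
    linarith
  -- derivatives of U and C
  have hUd : ∀ τ : ℝ, HasDerivAt U ((mH τ - mL τ) * f τ) τ := by
    intro τ
    rw [hUeq]
    exact (intervalIntegral.integral_hasDerivAt_right (hg.intervalIntegrable 0 τ)
      (hg.stronglyMeasurableAtFilter _ _) hg.continuousAt).add_const K
  have hCd : ∀ τ : ℝ, HasDerivAt C (cH * f τ) τ := by
    intro τ
    have : HasDerivAt (fun t : ℝ => ∫ s in (0:ℝ)..t, f s) (f τ) τ :=
      intervalIntegral.integral_hasDerivAt_right (hf.intervalIntegrable 0 τ)
        (hf.stronglyMeasurableAtFilter _ _) hf.continuousAt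
    have h2 := (this.const_mul cH).const_add cL
    have hfun : C = fun τ : ℝ => cL + cH * ∫ s in (0:ℝ)..τ, f s := funext hC
    rw [hfun]
    exact h2
  have hUcont : Continuous U := by
    have : Differentiable ℝ U := fun x => (hUd x).differentiableAt
    exact this.continuous
  -- monotonicity facts
  have hUmono : StrictMonoOn U (Set.Icc 0 1) := by
    apply strictMonoOn_of_deriv_pos (convex_Icc 0 1) hUcont.continuousOn
    intro x hx
    rw [interior_Icc] at hx
    rw [(hUd x).deriv]
    exact mul_pos (hdom x hx) (hfpos x hx)
  have hCmono : MonotoneOn C (Set.Icc 0 1) := by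
    intro x hx y hy hxy
    rw [hC, hC]
    have hint : (∫ s in (0:ℝ)..y, f s) - (∫ s in (0:ℝ)..x, f s) = ∫ s in x..y, f s := by
      rw [← intervalIntegral.integral_add_adjacent_intervals (hf.intervalIntegrable 0 x)
        (hf.intervalIntegrable x y)]
      ring
    have hnn : 0 ≤ ∫ s in x..y, f s := by
      apply intervalIntegral.integral_nonneg hxy
      intro u hu
      exact hf0 u ⟨le_trans hx.1 hu.1, le_trans hu.2 hy.2⟩
    nlinarith
  -- the local inverse
  set a := τstar / 2 with ha
  set b := (τstar + 1) / 2 with hb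
  have ha0 : 0 ≤ a := by positivity
  have haτ : a < τstar := by simp only [ha]; linarith
  have hτb : τstar < b := by simp only [hb]; linarith
  have hb1 : b ≤ 1 := by simp only [hb]; linarith
  have haI : a ∈ Set.Icc (0:ℝ) 1 := ⟨ha0, by linarith⟩
  have hbI : b ∈ Set.Icc (0:ℝ) 1 := ⟨by linarith, hb1⟩
  have hτI : τstar ∈ Set.Icc (0:ℝ) 1 := ⟨hτ0.le, hτ1.le⟩
  have hUa : U a < U τstar := hUmono haI hτI haτ
  have hUb : U τstar < U b := hUmono hτI hbI hτb
  set g := Function.invFunOn U (Set.Icc 0 1) with hgdef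
  have hmem : ∀ Q ∈ Set.Ioo (U a) (U b), ∃ τ ∈ Set.Icc (0:ℝ) 1, U τ = Q := by
    intro Q hQ
    have : Q ∈ U '' Set.Icc a b :=
      intermediate_value_Icc (by linarith) hUcont.continuousOn ⟨hQ.1.le, hQ.2.le⟩
    obtain ⟨τ, hτ, hτQ⟩ := this
    exact ⟨τ, ⟨le_trans ha0 hτ.1, le_trans hτ.2 hb1⟩, hτQ⟩
  have hgmem : ∀ Q ∈ Set.Ioo (U a) (U b), g Q ∈ Set.Icc (0:ℝ) 1 :=
    fun Q hQ => Function.invFunOn_mem (hmem Q hQ)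
  have hgval : ∀ Q ∈ Set.Ioo (U a) (U b), U (g Q) = Q :=
    fun Q hQ => Function.invFunOn_eq (hmem Q hQ)
  have hτmem : U τstar ∈ Set.Ioo (U a) (U b) := ⟨hUa, hUb⟩
  have hgτ : g (U τstar) = τstar := by
    have h1 := hgval _ hτmem
    exact hUmono.injOn (hgmem _ hτmem) hτI h1
  -- VP1 agrees with C ∘ g near U τstar
  have hVP : ∀ Q ∈ Set.Ioo (U a) (U b), VP1 Q = C (g Q) := by
    intro Q hQ
    rw [hVP1]
    apply IsLeast.csInf_eq
    constructor
    · exact ⟨g Q, hgmem Q hQ, (hgval Q hQ).ge, rfl⟩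
    · rintro c ⟨τ, hτ, hQτ, rfl⟩
      apply hCmono (hgmem Q hQ) hτ
      by_contra h
      push_neg at h
      have := hUmono hτ (hgmem Q hQ) h
      rw [hgval Q hQ] at this
      linarith
  -- continuity of g at U τstar
  have hgc : ContinuousAt g (U τstar) := by
    unfold ContinuousAt
    rw [hgτ, tendsto_order]
    constructor
    · intro c hc
      have hc2 : max c 0 < τstar := max_lt hc hτ0
      have hcI : max c 0 ∈ Set.Icc (0:ℝ) 1 := ⟨le_max_right _ _, by linarith⟩
      have hUc : U (max c 0) < U τstar := hUmono hcI hτI hc2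
      filter_upwards [Ioo_mem_nhds hUc hUb, Ioo_mem_nhds hUa hUb] with Q hQ1 hQ2
      by_contra h
      push_neg at h
      have hle : g Q ≤ max c 0 := le_trans h (le_max_left _ _)
      have := hUmono.monotoneOn (hgmem Q hQ2) hcI hle
      rw [hgval Q hQ2] at this
      exact absurd (lt_of_lt_of_le hQ1.1 this) (lt_irrefl _)
    · intro c hc
      have hc2 : τstar < min c 1 := lt_min hc hτ1
      have hcI : min c 1 ∈ Set.Icc (0:ℝ) 1 := ⟨by linarith, min_le_right _ _⟩
      have hUc : U τstar < U (min c 1) := hUmono hτI hcI hc2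
      filter_upwards [Ioo_mem_nhds hUa hUc, Ioo_mem_nhds hUa hUb] with Q hQ1 hQ2
      by_contra h
      push_neg at h
      have hle : min c 1 ≤ g Q := le_trans (min_le_left _ _) h
      have := hUmono.monotoneOn hcI (hgmem Q hQ2) hle
      rw [hgval Q hQ2] at this
      exact absurd (lt_of_le_of_lt this hQ1.2) (lt_irrefl _)
  -- derivative of g via local inverse
  have hUg : HasDerivAt U ((mH τstar - mL τstar) * f τstar) (g (U τstar)) := by
    rw [hgτ]; exact hUd τstar
  have hne : (mH τstar - mL τstar) * f τstar ≠ 0 := (mul_pos hd hfτ).ne'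
  have hfg : ∀ᶠ Q in nhds (U τstar), U (g Q) = Q := by
    filter_upwards [Ioo_mem_nhds hUa hUb] with Q hQ using hgval Q hQ
  have hgd : HasDerivAt g ((mH τstar - mL τstar) * f τstar)⁻¹ (U τstar) :=
    HasDerivAt.of_local_left_inverse hgc hUg hne hfg
  have hCg : HasDerivAt (C ∘ g)
      (cH * f τstar * ((mH τstar - mL τstar) * f τstar)⁻¹) (U τstar) := by
    have h1 : HasDerivAt C (cH * f τstar) (g (U τstar)) := by rw [hgτ]; exact hCd τstar
    exact h1.comp _ hgd
  have heq : VP1 =ᶠ[nhds (U τstar)] C ∘ g := by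
    filter_upwards [Ioo_mem_nhds hUa hUb] with Q hQ using hVP Q hQ
  have hfinal : HasDerivAt VP1
      (cH * f τstar * ((mH τstar - mL τstar) * f τstar)⁻¹) (U τstar) :=
    heq.hasDerivAt_iff.mpr hCg
  convert hfinal using 1
  field_simp
end

section
/- Suppose f(s) > 0 and m_H(s) − m_L(s) > 0 for all s ∈ (0,1). Define the budget-constrained value function V_P2(B) = sup{ U(τ) : τ ∈ [0,1], C(τ) ≤ B } and the quality-constrained value function V_P1(Q) = inf{ C(τ) : τ ∈ [0,1], U(τ) ≥ Q }. Then for every τ* ∈ (0,1), V_P2 is differentiable at B = C(τ*) with V_P2'(C(τ*)) = (m_H(τ*) − m_L(τ*)) / c_H, and the two shadow prices are reciprocal: V_P1'(U(τ*)) · V_P2'(C(τ*)) = 1. -/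
/-!
Both constraints are strictly increasing in the threshold on `[0,1]`: `C' = c_H f > 0` and
`U' = (m_H - m_L) f > 0`. Hence the feasible thresholds of either problem form an interval
ending (resp. starting) at the threshold where the constraint binds, and the optimum is attained
there: `V_P2 ∘ C = U` and `V_P1 ∘ U = C` on `[0,1]`. Inverting `C` (resp. `U`) near an interior
threshold gives `V_P2'(C τ) = U'(τ) / C'(τ)` and `V_P1'(U τ) = C'(τ) / U'(τ)`; the density
cancels, and the two shadow prices are reciprocal.
-/

open Set Function Filter Topology

section ValueFunction

variable {α : Type*} [LinearOrder α] {s : Set α} {φ ψ : α → ℝ} {t : α}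

theorem csSup_setOf_le_apply_eq (hφ : StrictMonoOn φ s) (hψ : MonotoneOn ψ s) (ht : t ∈ s) :
    sSup {u : ℝ | ∃ x ∈ s, φ x ≤ φ t ∧ u = ψ x} = ψ t :=
  IsGreatest.csSup_eq ⟨⟨t, ht, le_rfl, rfl⟩, by
    rintro u ⟨x, hx, hxt, rfl⟩
    exact hψ hx ht ((hφ.le_iff_le hx ht).1 hxt)⟩

theorem csInf_setOf_apply_le_eq (hψ : StrictMonoOn ψ s) (hφ : MonotoneOn φ s) (ht : t ∈ s) :
    sInf {c : ℝ | ∃ x ∈ s, ψ t ≤ ψ x ∧ c = φ x} = φ t :=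
  IsLeast.csInf_eq ⟨⟨t, ht, le_rfl, rfl⟩, by
    rintro c ⟨x, hx, htx, rfl⟩
    exact hφ ht hx ((hψ.le_iff_le ht hx).1 htx)⟩

end ValueFunction

section InverseOnIcc

variable {φ : ℝ → ℝ} {a b τ : ℝ}

theorem strictMonoOn_Icc_of_hasDerivAt_pos {φ' : ℝ → ℝ} (hφ : ∀ t, HasDerivAt φ (φ' t) t)
    (hpos : ∀ t ∈ Ioo a b, 0 < φ' t) : StrictMonoOn φ (Icc a b) :=
  strictMonoOn_of_deriv_pos (convex_Icc a b)
    (fun t _ => (hφ t).continuousAt.continuousWithinAt)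
    fun t ht => by
      rw [interior_Icc] at ht
      exact (hφ t).deriv ▸ hpos t ht

theorem StrictMonoOn.Icc_mem_nhds_apply (hφ : StrictMonoOn φ (Icc a b)) (hτ : τ ∈ Ioo a b) :
    Icc (φ a) (φ b) ∈ 𝓝 (φ τ) :=
  have hab : a ≤ b := hτ.1.le.trans hτ.2.le
  Icc_mem_nhds (hφ (left_mem_Icc.2 hab) (Ioo_subset_Icc_self hτ) hτ.1)
    (hφ (Ioo_subset_Icc_self hτ) (right_mem_Icc.2 hab) hτ.2)

theorem hasDerivAt_invFunOn_Icc (hφc : ContinuousOn φ (Icc a b))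
    (hφ : StrictMonoOn φ (Icc a b)) (hτ : τ ∈ Ioo a b) {d : ℝ} (hd : HasDerivAt φ d τ)
    (hd0 : d ≠ 0) : HasDerivAt (invFunOn φ (Icc a b)) d⁻¹ (φ τ) := by
  have hab : a ≤ b := hτ.1.le.trans hτ.2.le
  have himage : φ '' Icc a b = Icc (φ a) (φ b) := hφc.image_Icc_of_monotoneOn hab hφ.monotoneOn
  have hsurj : SurjOn φ (Icc a b) (Icc (φ a) (φ b)) := himage.symm.subset
  have hleft : invFunOn φ (Icc a b) (φ τ) = τ :=
    hφ.injOn.leftInvOn_invFunOn (Ioo_subset_Icc_self hτ)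
  have hnhds : Icc (φ a) (φ b) ∈ 𝓝 (φ τ) := hφ.Icc_mem_nhds_apply hτ
  have hmono : MonotoneOn (invFunOn φ (Icc a b)) (Icc (φ a) (φ b)) := fun B₁ h₁ B₂ h₂ h₁₂ =>
    (hφ.le_iff_le (hsurj.mapsTo_invFunOn h₁) (hsurj.mapsTo_invFunOn h₂)).1 <| by
      rwa [hsurj.rightInvOn_invFunOn h₁, hsurj.rightInvOn_invFunOn h₂]
  have hcont : ContinuousAt (invFunOn φ (Icc a b)) (φ τ) := by
    refine continuousAt_of_monotoneOn_of_image_mem_nhds hmono hnhds ?_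
    rw [← himage, hφ.injOn.invFunOn_image subset_rfl, hleft]
    exact Icc_mem_nhds hτ.1 hτ.2
  exact .of_local_left_inverse hcont (by rwa [hleft]) hd0
    (eventually_of_mem hnhds hsurj.rightInvOn_invFunOn)

theorem hasDerivAt_of_eqOn_comp_Icc {V ψ : ℝ → ℝ} (hφc : ContinuousOn φ (Icc a b))
    (hφ : StrictMonoOn φ (Icc a b)) (hV : EqOn (V ∘ φ) ψ (Icc a b)) (hτ : τ ∈ Ioo a b)
    {dφ dψ : ℝ} (hdφ : HasDerivAt φ dφ τ) (hdψ : HasDerivAt ψ dψ τ) (hdφ0 : dφ ≠ 0) :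
    HasDerivAt V (dψ / dφ) (φ τ) := by
  have hsurj : SurjOn φ (Icc a b) (Icc (φ a) (φ b)) :=
    intermediate_value_Icc (hτ.1.le.trans hτ.2.le) hφc
  have hleft : invFunOn φ (Icc a b) (φ τ) = τ :=
    hφ.injOn.leftInvOn_invFunOn (Ioo_subset_Icc_self hτ)
  have hVeq : ψ ∘ invFunOn φ (Icc a b) =ᶠ[𝓝 (φ τ)] V :=
    eventually_of_mem (hφ.Icc_mem_nhds_apply hτ) fun B hB => by
      rw [comp_apply, ← hV (hsurj.mapsTo_invFunOn hB), comp_apply, hsurj.rightInvOn_invFunOn hB]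
  rw [← hleft] at hdψ
  rw [div_eq_mul_inv]
  exact (hdψ.comp _ (hasDerivAt_invFunOn_Icc hφc hφ hτ hdφ hdφ0)).congr_of_eventuallyEq hVeq.symm

end InverseOnIcc

theorem two_model_cascade_reciprocal_shadow_prices_general
    (f mL mH : ℝ → ℝ) (hf : Continuous f)
    (hmL : Continuous mL) (hmH : Continuous mH)
    (cL cH : ℝ) (hcH : 0 < cH)
    (C U : ℝ → ℝ)
    (hC : ∀ τ, C τ = cL + cH * ∫ s in (0:ℝ)..τ, f s)
    (hU : ∀ τ, U τ = (∫ s in (0:ℝ)..τ, mH s * f s) + ∫ s in τ..(1:ℝ), mL s * f s)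
    (hfpos : ∀ s ∈ Set.Ioo (0:ℝ) 1, 0 < f s)
    (hdom : ∀ s ∈ Set.Ioo (0:ℝ) 1, 0 < mH s - mL s)
    (VP1 VP2 : ℝ → ℝ)
    (hVP1 : ∀ Q, VP1 Q = sInf {c : ℝ | ∃ τ ∈ Set.Icc (0:ℝ) 1, Q ≤ U τ ∧ c = C τ})
    (hVP2 : ∀ B, VP2 B = sSup {u : ℝ | ∃ τ ∈ Set.Icc (0:ℝ) 1, C τ ≤ B ∧ u = U τ})
    (τstar : ℝ) (hτstar : τstar ∈ Set.Ioo (0:ℝ) 1) :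
    HasDerivAt VP2 ((mH τstar - mL τstar) / cH) (C τstar) ∧
    deriv VP1 (U τstar) * deriv VP2 (C τstar) = 1 := by
  have hdC (t : ℝ) : HasDerivAt C (cH * f t) t := by
    rw [show C = _ from funext hC]
    exact ((hf.integral_hasStrictDerivAt 0 t).hasDerivAt.const_mul cH).const_add cL
  have hdU (t : ℝ) : HasDerivAt U ((mH t - mL t) * f t) t := by
    have hmLf : Continuous fun s => mL s * f s := hmL.mul hf
    rw [show U = _ from funext hU, sub_mul, sub_eq_add_neg]
    exact ((hmH.mul hf).integral_hasStrictDerivAt 0 t).hasDerivAt.add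
      (intervalIntegral.integral_hasDerivAt_left (hmLf.intervalIntegrable t 1)
        (hmLf.stronglyMeasurableAtFilter _ _) hmLf.continuousAt)
  have hCmono : StrictMonoOn C (Icc 0 1) :=
    strictMonoOn_Icc_of_hasDerivAt_pos hdC fun t ht => mul_pos hcH (hfpos t ht)
  have hUmono : StrictMonoOn U (Icc 0 1) :=
    strictMonoOn_Icc_of_hasDerivAt_pos hdU fun t ht => mul_pos (hdom t ht) (hfpos t ht)
  have hVP2C : EqOn (VP2 ∘ C) U (Icc 0 1) := fun t ht =>
    (hVP2 _).trans (csSup_setOf_le_apply_eq hCmono hUmono.monotoneOn ht)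
  have hVP1U : EqOn (VP1 ∘ U) C (Icc 0 1) := fun t ht =>
    (hVP1 _).trans (csInf_setOf_apply_le_eq hUmono hCmono.monotoneOn ht)
  have hfτ := hfpos τstar hτstar
  have hdomτ := hdom τstar hτstar
  have hVP2' := hasDerivAt_of_eqOn_comp_Icc (fun t _ => (hdC t).continuousAt.continuousWithinAt)
    hCmono hVP2C hτstar (hdC τstar) (hdU τstar) (by positivity)
  have hVP1' := hasDerivAt_of_eqOn_comp_Icc (fun t _ => (hdU t).continuousAt.continuousWithinAt)
    hUmono hVP1U hτstar (hdU τstar) (hdC τstar) (by positivity)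
  refine ⟨?_, ?_⟩
  · convert hVP2' using 1
    field_simp
  · rw [hVP1'.deriv, hVP2'.deriv]
    field_simp

/-- If `f > 0` and `mH - mL > 0` on `(0,1)`, the
budget-constrained value function `V_P2(B) = sup { U τ : τ ∈ [0,1], C τ ≤ B }`
is differentiable at `B = C τ*` with derivative `(mH τ* - mL τ*) / cH`, and the
shadow prices of the two dual problems are reciprocal:
`V_P1'(U τ*) · V_P2'(C τ*) = 1`, where
`V_P1(Q) = inf { C τ : τ ∈ [0,1], U τ ≥ Q }`. -/
theorem two_model_cascade_reciprocal_shadow_prices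
    (f mL mH : ℝ → ℝ) (hf : Continuous f)
    (hf0 : ∀ s ∈ Set.Icc (0:ℝ) 1, 0 ≤ f s)
    (hfint : (∫ s in (0:ℝ)..1, f s) = 1)
    (hmL : Continuous mL) (hmH : Continuous mH)
    (cL cH : ℝ) (hcL : 0 ≤ cL) (hcH : 0 < cH)
    (C U : ℝ → ℝ)
    (hC : ∀ τ, C τ = cL + cH * ∫ s in (0:ℝ)..τ, f s)
    (hU : ∀ τ, U τ = (∫ s in (0:ℝ)..τ, mH s * f s) + ∫ s in τ..(1:ℝ), mL s * f s)
    (hfpos : ∀ s ∈ Set.Ioo (0:ℝ) 1, 0 < f s)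
    (hdom : ∀ s ∈ Set.Ioo (0:ℝ) 1, 0 < mH s - mL s)
    (VP1 VP2 : ℝ → ℝ)
    (hVP1 : ∀ Q, VP1 Q = sInf {c : ℝ | ∃ τ ∈ Set.Icc (0:ℝ) 1, Q ≤ U τ ∧ c = C τ})
    (hVP2 : ∀ B, VP2 B = sSup {u : ℝ | ∃ τ ∈ Set.Icc (0:ℝ) 1, C τ ≤ B ∧ u = U τ})
    (τstar : ℝ) (hτstar : τstar ∈ Set.Ioo (0:ℝ) 1) :
    HasDerivAt VP2 ((mH τstar - mL τstar) / cH) (C τstar) ∧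
    deriv VP1 (U τstar) * deriv VP2 (C τstar) = 1 :=
  two_model_cascade_reciprocal_shadow_prices_general f mL mH hf hmL hmH cL cH hcH C U hC hU hfpos
    hdom VP1 VP2 hVP1 hVP2 τstar hτstar
end

section
/- Suppose f(s) > 0 and m_H(s) − m_L(s) > 0 for all s ∈ (0,1). Then the Pareto frontier U†(B) = sup{ U(τ) : τ ∈ [0,1], C(τ) ≤ B } is strictly increasing on the budget interval [c_L, c_L + c_H]. -/
/-- If `f > 0` and `mH - mL > 0` on `(0,1)`, the Pareto
frontier `U†(B) = sup { U τ : τ ∈ [0,1], C τ ≤ B }` is strictly increasing on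
the budget interval `[cL, cL + cH]`. -/
theorem two_model_cascade_frontier_strict_mono
    (f mL mH : ℝ → ℝ) (hf : Continuous f)
    (hf0 : ∀ s ∈ Set.Icc (0:ℝ) 1, 0 ≤ f s)
    (hfint : (∫ s in (0:ℝ)..1, f s) = 1)
    (hmL : Continuous mL) (hmH : Continuous mH)
    (cL cH : ℝ) (hcL : 0 ≤ cL) (hcH : 0 < cH)
    (C U : ℝ → ℝ)
    (hC : ∀ τ, C τ = cL + cH * ∫ s in (0:ℝ)..τ, f s)
    (hU : ∀ τ, U τ = (∫ s in (0:ℝ)..τ, mH s * f s) + ∫ s in τ..(1:ℝ), mL s * f s)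
    (hfpos : ∀ s ∈ Set.Ioo (0:ℝ) 1, 0 < f s)
    (hdom : ∀ s ∈ Set.Ioo (0:ℝ) 1, 0 < mH s - mL s)
    (Udag : ℝ → ℝ)
    (hUdag : ∀ B, Udag B = sSup {u : ℝ | ∃ τ ∈ Set.Icc (0:ℝ) 1, C τ ≤ B ∧ u = U τ}) :
    StrictMonoOn Udag (Set.Icc cL (cL + cH)) := by
  have hintf : ∀ a b : ℝ, IntervalIntegrable f MeasureTheory.volume a b :=
    fun a b => hf.intervalIntegrable a b
  have hintH : ∀ a b : ℝ, IntervalIntegrable (fun s => mH s * f s) MeasureTheory.volume a b :=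
    fun a b => (hmH.mul hf).intervalIntegrable a b
  have hintL : ∀ a b : ℝ, IntervalIntegrable (fun s => mL s * f s) MeasureTheory.volume a b :=
    fun a b => (hmL.mul hf).intervalIntegrable a b
  -- positivity of the relevant integrals
  have hposg : ∀ a b : ℝ, 0 ≤ a → a < b → b ≤ 1 →
      0 < ∫ s in a..b, (mH s - mL s) * f s := by
    intro a b ha hab hb
    apply intervalIntegral.intervalIntegral_pos_of_pos_on
      (((hmH.sub hmL).mul hf).intervalIntegrable a b)
    · intro x hx
      have hx01 : x ∈ Set.Ioo (0:ℝ) 1 := ⟨lt_of_le_of_lt ha hx.1, lt_of_lt_of_le hx.2 hb⟩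
      exact mul_pos (hdom x hx01) (hfpos x hx01)
    · exact hab
  have hposf : ∀ a b : ℝ, 0 ≤ a → a < b → b ≤ 1 → 0 < ∫ s in a..b, f s := by
    intro a b ha hab hb
    apply intervalIntegral.intervalIntegral_pos_of_pos_on (hintf a b)
    · intro x hx; exact hfpos x ⟨lt_of_le_of_lt ha hx.1, lt_of_lt_of_le hx.2 hb⟩
    · exact hab
  -- strict monotonicity of C on [0,1]
  have hCmono : StrictMonoOn C (Set.Icc (0:ℝ) 1) := by
    intro a ha b hb hab
    rw [hC, hC]
    have hsub : (∫ s in (0:ℝ)..b, f s) - ∫ s in (0:ℝ)..a, f s = ∫ s in a..b, f s :=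
      intervalIntegral.integral_interval_sub_left (hintf 0 b) (hintf 0 a)
    nlinarith [hposf a b ha.1 hab hb.2]
  -- strict monotonicity of U on [0,1]
  have hUmono : StrictMonoOn U (Set.Icc (0:ℝ) 1) := by
    intro a ha b hb hab
    rw [hU, hU]
    have h1 : (∫ s in (0:ℝ)..b, mH s * f s) - ∫ s in (0:ℝ)..a, mH s * f s
        = ∫ s in a..b, mH s * f s :=
      intervalIntegral.integral_interval_sub_left (hintH 0 b) (hintH 0 a)
    have h2 : (∫ s in a..(1:ℝ), mL s * f s)
        = (∫ s in a..b, mL s * f s) + ∫ s in b..(1:ℝ), mL s * f s :=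
      (intervalIntegral.integral_add_adjacent_intervals (hintL a b) (hintL b 1)).symm
    have h3 : (∫ s in a..b, (mH s - mL s) * f s)
        = (∫ s in a..b, mH s * f s) - ∫ s in a..b, mL s * f s := by
      rw [← intervalIntegral.integral_sub (hintH a b) (hintL a b)]
      apply intervalIntegral.integral_congr
      intro s _; ring
    have hpos := hposg a b ha.1 hab hb.2
    linarith
  -- endpoint values of C
  have hC0 : C 0 = cL := by simp [hC]
  have hC1 : C 1 = cL + cH := by rw [hC, hfint]; ring
  -- continuity of C
  have hCcont : Continuous C := by
    have : C = fun τ => cL + cH * ∫ s in (0:ℝ)..τ, f s := funext hC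
    rw [this]
    exact continuous_const.add (continuous_const.mul
      (intervalIntegral.continuous_primitive hintf 0))
  -- surjectivity of C onto [cL, cL + cH]
  have hsurj : ∀ B ∈ Set.Icc cL (cL + cH), ∃ τ ∈ Set.Icc (0:ℝ) 1, C τ = B := by
    intro B hB
    have : B ∈ Set.Icc (C 0) (C 1) := by rw [hC0, hC1]; exact hB
    obtain ⟨τ, hτ, hτB⟩ := intermediate_value_Icc (by norm_num : (0:ℝ) ≤ 1)
      hCcont.continuousOn this
    exact ⟨τ, hτ, hτB⟩
  -- characterization of Udag
  have hgreat : ∀ τB ∈ Set.Icc (0:ℝ) 1, ∀ B, C τB = B →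
      IsGreatest {u : ℝ | ∃ τ ∈ Set.Icc (0:ℝ) 1, C τ ≤ B ∧ u = U τ} (U τB) := by
    intro τB hτB B hCB
    constructor
    · exact ⟨τB, hτB, le_of_eq hCB, rfl⟩
    · rintro u ⟨τ, hτ, hCτ, rfl⟩
      have hle : τ ≤ τB := by
        by_contra h
        push_neg at h
        have := hCmono hτB hτ h
        rw [hCB] at this
        linarith
      exact hUmono.monotoneOn hτ hτB hle
  intro B1 hB1 B2 hB2 h12
  obtain ⟨τ1, hτ1, hCτ1⟩ := hsurj B1 hB1
  obtain ⟨τ2, hτ2, hCτ2⟩ := hsurj B2 hB2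
  have h1 := hgreat τ1 hτ1 B1 hCτ1
  have h2 := hgreat τ2 hτ2 B2 hCτ2
  rw [hUdag B1, hUdag B2, h1.csSup_eq, h2.csSup_eq]
  have hτlt : τ1 < τ2 := by
    by_contra h
    push_neg at h
    have := hCmono.monotoneOn hτ2 hτ1 h
    rw [hCτ1, hCτ2] at this
    linarith
  exact hUmono hτ1 hτ2 hτlt
end

section
/- Suppose f(s) > 0 for all s ∈ (0,1), m_H(s) − m_L(s) > 0 for all s ∈ (0,1), and the escalation benefit m_H − m_L is weakly decreasing on (0,1). Let B ∈ (c_L, c_L + c_H) and let τ_B ∈ (0,1) be the unique threshold with C(τ_B) = B. Then there is zero duality gap for the budget-constrained problem: inf over λ ≥ 0 of sup over τ ∈ [0,1] of [U(τ) − λ·(C(τ) − B)] equals U†(B) = sup{ U(τ) : τ ∈ [0,1], C(τ) ≤ B }, and the infimum is attained at the shadow price λ* = (m_H(τ_B) − m_L(τ_B)) / c_H. -/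
open MeasureTheory Set

/-!
With `h = mH - mL`, the Lagrangian at the shadow price `λ* = h τB / cH` is
`U τ - λ* (C τ - B) = U τB + ∫_{τB}^τ (h s - h τB) f s`, and since `h` is decreasing and `f ≥ 0`
the integrand is `≥ 0` to the left of `τB` and `≤ 0` to its right, so the integral is never positive.
Hence `τB` maximizes the Lagrangian at `λ*`, which makes `(τB, λ*)` a saddle point: the dual value at
`λ*` and the constrained optimum both equal `U τB`, while weak duality bounds every dual value below
by `U τB`.
-/

section LagrangianDuality

variable {α : Type*} {S : Set α} {U C : α → ℝ} {B : ℝ}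

theorem bddAbove_lagrangian_of_isCompact [TopologicalSpace α] (hS : IsCompact S)
    (hU : ContinuousOn U S) (hC : ContinuousOn C S) (lam : ℝ) :
    BddAbove {v | ∃ y ∈ S, v = U y - lam * (C y - B)} := by
  have hcont : ContinuousOn (fun y => U y - lam * (C y - B)) S :=
    hU.sub (continuousOn_const.mul (hC.sub continuousOn_const))
  refine (hS.image_of_continuousOn hcont).bddAbove.mono ?_
  rintro _ ⟨y, hy, rfl⟩
  exact mem_image_of_mem _ hy

theorem zero_duality_gap_of_saddle_point {D : ℝ → ℝ} {lamS : ℝ} {x : α}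
    (hD : ∀ lam, D lam = sSup {v | ∃ y ∈ S, v = U y - lam * (C y - B)})
    (hbdd : ∀ lam, BddAbove {v | ∃ y ∈ S, v = U y - lam * (C y - B)})
    (hx : x ∈ S) (hCx : C x = B) (hlamS : 0 ≤ lamS)
    (hsaddle : ∀ y ∈ S, U y - lamS * (C y - B) ≤ U x) :
    sInf {d | ∃ lam, 0 ≤ lam ∧ d = D lam} = sSup {u | ∃ y ∈ S, C y ≤ B ∧ u = U y} ∧
      D lamS = sSup {u | ∃ y ∈ S, C y ≤ B ∧ u = U y} := by
  have hmem : ∀ lam, U x ∈ {v | ∃ y ∈ S, v = U y - lam * (C y - B)} :=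
    fun lam => ⟨x, hx, by rw [hCx, sub_self, mul_zero, sub_zero]⟩
  have hprimal : IsGreatest {u | ∃ y ∈ S, C y ≤ B ∧ u = U y} (U x) := by
    refine ⟨⟨x, hx, hCx.le, rfl⟩, ?_⟩
    rintro _ ⟨y, hy, hCy, rfl⟩
    have hpenalty := mul_nonpos_of_nonneg_of_nonpos hlamS (sub_nonpos.2 hCy)
    linarith [hsaddle y hy]
  have hDlamS : D lamS = U x := by
    rw [hD]
    refine IsGreatest.csSup_eq ⟨hmem lamS, ?_⟩
    rintro _ ⟨y, hy, rfl⟩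
    exact hsaddle y hy
  have hdual : IsLeast {d | ∃ lam, 0 ≤ lam ∧ d = D lam} (U x) := by
    refine ⟨⟨lamS, hlamS, hDlamS.symm⟩, ?_⟩
    rintro _ ⟨lam, -, rfl⟩
    rw [hD]
    exact le_csSup (hbdd lam) (hmem lam)
  rw [hprimal.csSup_eq, hdual.csInf_eq, hDlamS]
  exact ⟨rfl, rfl⟩

end LagrangianDuality

section IntervalIntegrals

variable {g k φ : ℝ → ℝ}

theorem continuous_integral_add_integral (hg : ∀ a b, IntervalIntegrable g volume a b)
    (hk : ∀ a b, IntervalIntegrable k volume a b) (a b : ℝ) :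
    Continuous fun τ => (∫ s in a..τ, g s) + ∫ s in τ..b, k s := by
  simp only [intervalIntegral.integral_symm b]
  exact (intervalIntegral.continuous_primitive hg a).add
    (intervalIntegral.continuous_primitive hk b).neg

theorem integral_add_integral_sub_integral_add_integral
    (hg : ∀ a b, IntervalIntegrable g volume a b) (hk : ∀ a b, IntervalIntegrable k volume a b)
    (a b σ τ : ℝ) :
    ((∫ s in a..τ, g s) + ∫ s in τ..b, k s) - ((∫ s in a..σ, g s) + ∫ s in σ..b, k s) =
      ∫ s in σ..τ, (g s - k s) := by
  rw [intervalIntegral.integral_sub (hg σ τ) (hk σ τ),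
    ← intervalIntegral.integral_interval_sub_left (hg a τ) (hg a σ),
    ← intervalIntegral.integral_add_adjacent_intervals (hk σ τ) (hk τ b)]
  ring

theorem integral_nonpos_of_Ioo_nonpos_of_Ioo_nonneg {σ τ : ℝ}
    (hright : ∀ s ∈ Ioo σ τ, φ s ≤ 0) (hleft : ∀ s ∈ Ioo τ σ, 0 ≤ φ s) :
    ∫ s in σ..τ, φ s ≤ 0 := by
  rcases le_total σ τ with hστ | hτσ
  · rw [intervalIntegral.integral_of_le hστ, integral_Ioc_eq_integral_Ioo]
    exact setIntegral_nonpos measurableSet_Ioo hright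
  · rw [intervalIntegral.integral_symm, intervalIntegral.integral_of_le hτσ,
      integral_Ioc_eq_integral_Ioo, neg_nonpos]
    exact setIntegral_nonneg measurableSet_Ioo hleft

end IntervalIntegrals

section Cascade

variable {f mL mH C U : ℝ → ℝ} {cL cH : ℝ}

theorem cascade_lagrangian_eq (hf : Continuous f) (hmL : Continuous mL) (hmH : Continuous mH)
    (hcH : cH ≠ 0) (hC : ∀ τ, C τ = cL + cH * ∫ s in (0:ℝ)..τ, f s)
    (hU : ∀ τ, U τ = (∫ s in (0:ℝ)..τ, mH s * f s) + ∫ s in τ..(1:ℝ), mL s * f s) (σ τ : ℝ) :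
    U τ - (mH σ - mL σ) / cH * (C τ - C σ) =
      U σ + ∫ s in σ..τ, ((mH s - mL s) - (mH σ - mL σ)) * f s := by
  have hif : ∀ a b, IntervalIntegrable f volume a b := fun a b => hf.intervalIntegrable a b
  have hquality : U τ - U σ = ∫ s in σ..τ, (mH s * f s - mL s * f s) := by
    rw [hU, hU]
    exact integral_add_integral_sub_integral_add_integral
      (fun a b => (hmH.mul hf).intervalIntegrable a b)
      (fun a b => (hmL.mul hf).intervalIntegrable a b) 0 1 σ τ
  have hcost : C τ - C σ = cH * ∫ s in σ..τ, f s := by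
    rw [hC, hC, ← intervalIntegral.integral_interval_sub_left (hif 0 τ) (hif 0 σ)]
    ring
  have hsplit : ∫ s in σ..τ, ((mH s - mL s) - (mH σ - mL σ)) * f s =
      (∫ s in σ..τ, (mH s * f s - mL s * f s)) - (mH σ - mL σ) * ∫ s in σ..τ, f s := calc
    _ = ∫ s in σ..τ, ((mH s * f s - mL s * f s) - (mH σ - mL σ) * f s) := by
      congr 1 with s
      ring
    _ = _ := by
      rw [intervalIntegral.integral_sub
        ((by fun_prop : Continuous fun s => mH s * f s - mL s * f s).intervalIntegrable σ τ)
        ((by fun_prop : Continuous fun s => (mH σ - mL σ) * f s).intervalIntegrable σ τ),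
        intervalIntegral.integral_const_mul]
  rw [hsplit, ← hquality, hcost]
  field_simp
  ring

theorem cascade_lagrangian_le_of_antitone (hf : Continuous f) (hmL : Continuous mL)
    (hmH : Continuous mH) (hf0 : ∀ s ∈ Icc (0:ℝ) 1, 0 ≤ f s) (hcH : cH ≠ 0)
    (hC : ∀ τ, C τ = cL + cH * ∫ s in (0:ℝ)..τ, f s)
    (hU : ∀ τ, U τ = (∫ s in (0:ℝ)..τ, mH s * f s) + ∫ s in τ..(1:ℝ), mL s * f s)
    (hdec : ∀ s' ∈ Ioo (0:ℝ) 1, ∀ s'' ∈ Ioo (0:ℝ) 1, s'' < s' →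
      mH s' - mL s' ≤ mH s'' - mL s'')
    {σ : ℝ} (hσ : σ ∈ Ioo (0:ℝ) 1) {τ : ℝ} (hτ : τ ∈ Icc (0:ℝ) 1) :
    U τ - (mH σ - mL σ) / cH * (C τ - C σ) ≤ U σ := by
  rw [cascade_lagrangian_eq hf hmL hmH hcH hC hU, add_le_iff_nonpos_right]
  apply integral_nonpos_of_Ioo_nonpos_of_Ioo_nonneg
  · intro s ⟨hσs, hsτ⟩
    have hs : s ∈ Ioo (0:ℝ) 1 := ⟨hσ.1.trans hσs, hsτ.trans_le hτ.2⟩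
    exact mul_nonpos_of_nonpos_of_nonneg (sub_nonpos.2 (hdec s hs σ hσ hσs))
      (hf0 s (Ioo_subset_Icc_self hs))
  · intro s ⟨hτs, hsσ⟩
    have hs : s ∈ Ioo (0:ℝ) 1 := ⟨hτ.1.trans_lt hτs, hsσ.trans hσ.2⟩
    exact mul_nonneg (sub_nonneg.2 (hdec σ hσ s hs hsσ)) (hf0 s (Ioo_subset_Icc_self hs))

end Cascade

theorem two_model_cascade_zero_duality_gap_general
    (f mL mH : ℝ → ℝ) (hf : Continuous f)
    (hf0 : ∀ s ∈ Set.Icc (0:ℝ) 1, 0 ≤ f s)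
    (hmL : Continuous mL) (hmH : Continuous mH)
    (cL cH : ℝ) (hcH : 0 < cH)
    (C U : ℝ → ℝ)
    (hC : ∀ τ, C τ = cL + cH * ∫ s in (0:ℝ)..τ, f s)
    (hU : ∀ τ, U τ = (∫ s in (0:ℝ)..τ, mH s * f s) + ∫ s in τ..(1:ℝ), mL s * f s)
    (hdom : ∀ s ∈ Set.Ioo (0:ℝ) 1, 0 < mH s - mL s)
    (hdec : ∀ s' ∈ Set.Ioo (0:ℝ) 1, ∀ s'' ∈ Set.Ioo (0:ℝ) 1, s'' < s' →
      mH s' - mL s' ≤ mH s'' - mL s'')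
    (B : ℝ)
    (τB : ℝ) (hτB : τB ∈ Set.Ioo (0:ℝ) 1) (hCτB : C τB = B)
    (D : ℝ → ℝ)
    (hD : ∀ lam, D lam = sSup {v : ℝ | ∃ τ ∈ Set.Icc (0:ℝ) 1, v = U τ - lam * (C τ - B)})
    (Udag : ℝ)
    (hUdag : Udag = sSup {u : ℝ | ∃ τ ∈ Set.Icc (0:ℝ) 1, C τ ≤ B ∧ u = U τ}) :
    sInf {d : ℝ | ∃ lam : ℝ, 0 ≤ lam ∧ d = D lam} = Udag ∧
    D ((mH τB - mL τB) / cH) = Udag := by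
  subst hUdag hCτB
  have hUc : Continuous U := by
    rw [funext hU]
    exact continuous_integral_add_integral (fun a b => (hmH.mul hf).intervalIntegrable a b)
      (fun a b => (hmL.mul hf).intervalIntegrable a b) 0 1
  have hCc : Continuous C := by
    rw [funext hC]
    exact continuous_const.add
      (continuous_const.mul (intervalIntegral.continuous_primitive hf.intervalIntegrable 0))
  exact zero_duality_gap_of_saddle_point hD
    (bddAbove_lagrangian_of_isCompact isCompact_Icc hUc.continuousOn hCc.continuousOn)
    (Ioo_subset_Icc_self hτB) rfl (div_pos (hdom τB hτB) hcH).le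
    (fun τ hτ => cascade_lagrangian_le_of_antitone hf hmL hmH hf0 hcH.ne' hC hU hdec hτB hτ)

/-- Under positivity of `f`, positive and weakly decreasing
escalation benefit on `(0,1)`, and an interior budget `B ∈ (cL, cL + cH)` with
unique threshold `τ_B ∈ (0,1)` satisfying `C τ_B = B`: the budget-constrained
problem has zero duality gap,
`inf_{λ ≥ 0} sup_{τ ∈ [0,1]} [U τ - λ (C τ - B)] = U†(B)`, and the dual
infimum is attained at the shadow price `λ* = (mH τ_B - mL τ_B) / cH`. -/
theorem two_model_cascade_zero_duality_gap
    (f mL mH : ℝ → ℝ) (hf : Continuous f)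
    (hf0 : ∀ s ∈ Set.Icc (0:ℝ) 1, 0 ≤ f s)
    (hfint : (∫ s in (0:ℝ)..1, f s) = 1)
    (hmL : Continuous mL) (hmH : Continuous mH)
    (cL cH : ℝ) (hcL : 0 ≤ cL) (hcH : 0 < cH)
    (C U : ℝ → ℝ)
    (hC : ∀ τ, C τ = cL + cH * ∫ s in (0:ℝ)..τ, f s)
    (hU : ∀ τ, U τ = (∫ s in (0:ℝ)..τ, mH s * f s) + ∫ s in τ..(1:ℝ), mL s * f s)
    (hfpos : ∀ s ∈ Set.Ioo (0:ℝ) 1, 0 < f s)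
    (hdom : ∀ s ∈ Set.Ioo (0:ℝ) 1, 0 < mH s - mL s)
    (hdec : ∀ s' ∈ Set.Ioo (0:ℝ) 1, ∀ s'' ∈ Set.Ioo (0:ℝ) 1, s'' < s' →
      mH s' - mL s' ≤ mH s'' - mL s'')
    (B : ℝ) (hB : B ∈ Set.Ioo cL (cL + cH))
    (τB : ℝ) (hτB : τB ∈ Set.Ioo (0:ℝ) 1) (hCτB : C τB = B)
    (D : ℝ → ℝ)
    (hD : ∀ lam, D lam = sSup {v : ℝ | ∃ τ ∈ Set.Icc (0:ℝ) 1, v = U τ - lam * (C τ - B)})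
    (Udag : ℝ)
    (hUdag : Udag = sSup {u : ℝ | ∃ τ ∈ Set.Icc (0:ℝ) 1, C τ ≤ B ∧ u = U τ}) :
    sInf {d : ℝ | ∃ lam : ℝ, 0 ≤ lam ∧ d = D lam} = Udag ∧
    D ((mH τB - mL τB) / cH) = Udag :=
  two_model_cascade_zero_duality_gap_general f mL mH hf hf0 hmL hmH cL cH hcH C U hC hU hdom hdec B
    τB hτB hCτB D hD Udag hUdag
end

section
/- Suppose the escalation benefit m_H − m_L is weakly decreasing on [0,1] (s' > s'' implies m_H(s') − m_L(s') ≤ m_H(s'') − m_L(s'')). Let λ ≥ 0 and let τ* ∈ (0,1) satisfy the first-order condition m_H(τ*) − m_L(τ*) = λ · c_H. Then τ* is a global maximizer of the Lagrangian τ ↦ U(τ) − λ·C(τ) over [0,1]; that is, under a decreasing-benefit condition the first-order condition is sufficient for global optimality. -/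
/-!
Moving the threshold from `τ` to `τ*` changes the Lagrangian by
`∫ s in τ..τ*, (Δ s - λ c_H) f s`, where `Δ = m_H - m_L` is the escalation benefit.
By the first-order condition `λ c_H = Δ τ*`, and since `Δ` is decreasing the integrand is
nonnegative to the left of `τ*` and nonpositive to the right of it; in both orientations of
the interval the integral is therefore nonnegative.
-/

open Set intervalIntegral

theorem AntitoneOn.integral_sub_mul_nonneg {g w : ℝ → ℝ} {a b c τ : ℝ}
    (hg : AntitoneOn g (Icc a b)) (hw : ∀ s ∈ Icc a b, 0 ≤ w s)
    (hc : c ∈ Icc a b) (hτ : τ ∈ Icc a b) :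
    0 ≤ ∫ s in τ..c, (g s - g c) * w s := by
  rcases le_total τ c with hτc | hcτ
  · refine integral_nonneg hτc fun s hs => ?_
    have hs' : s ∈ Icc a b := ⟨hτ.1.trans hs.1, hs.2.trans hc.2⟩
    exact mul_nonneg (sub_nonneg.2 (hg hs' hc hs.2)) (hw s hs')
  · rw [integral_symm, ← integral_neg]
    refine integral_nonneg hcτ fun s hs => ?_
    have hs' : s ∈ Icc a b := ⟨hc.1.trans hs.1, hs.2.trans hτ.2⟩
    exact neg_nonneg.2 (mul_nonpos_of_nonpos_of_nonneg
      (sub_nonpos.2 (hg hc hs' hs.1)) (hw s hs'))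

/-- The Lagrangian `U τ - λ C τ` of the two-model cascade with threshold `τ`. -/
noncomputable def cascadeLagrangian (f mL mH : ℝ → ℝ) (cL cH lam τ : ℝ) : ℝ :=
  (∫ s in (0:ℝ)..τ, mH s * f s) + (∫ s in τ..(1:ℝ), mL s * f s)
    - lam * (cL + cH * ∫ s in (0:ℝ)..τ, f s)

theorem cascadeLagrangian_sub {f mL mH : ℝ → ℝ} (hf : Continuous f) (hmL : Continuous mL)
    (hmH : Continuous mH) (cL cH lam τ τ' : ℝ) :
    cascadeLagrangian f mL mH cL cH lam τ' - cascadeLagrangian f mL mH cL cH lam τ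
      = ∫ s in τ..τ', (mH s - mL s - lam * cH) * f s := by
  have hHf : Continuous fun s => mH s * f s := hmH.mul hf
  have hLf : Continuous fun s => mL s * f s := hmL.mul hf
  have hH : (∫ s in (0:ℝ)..τ', mH s * f s) - ∫ s in (0:ℝ)..τ, mH s * f s
      = ∫ s in τ..τ', mH s * f s :=
    integral_interval_sub_left (hHf.intervalIntegrable _ _) (hHf.intervalIntegrable _ _)
  have hL : (∫ s in τ..τ', mL s * f s) + ∫ s in τ'..(1:ℝ), mL s * f s
      = ∫ s in τ..(1:ℝ), mL s * f s :=
    integral_add_adjacent_intervals (hLf.intervalIntegrable _ _) (hLf.intervalIntegrable _ _)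
  have hF : (∫ s in (0:ℝ)..τ', f s) - ∫ s in (0:ℝ)..τ, f s = ∫ s in τ..τ', f s :=
    integral_interval_sub_left (hf.intervalIntegrable _ _) (hf.intervalIntegrable _ _)
  have hsplit : (∫ s in τ..τ', (mH s - mL s - lam * cH) * f s)
      = (∫ s in τ..τ', mH s * f s) - (∫ s in τ..τ', mL s * f s)
        - lam * cH * ∫ s in τ..τ', f s := by
    have hHL : IntervalIntegrable (fun s => mH s * f s - mL s * f s) MeasureTheory.volume τ τ' :=
      (hHf.sub hLf).intervalIntegrable _ _
    have hcf : IntervalIntegrable (fun s => lam * cH * f s) MeasureTheory.volume τ τ' :=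
      (hf.intervalIntegrable _ _).const_mul _
    rw [← integral_const_mul,
      ← integral_sub (hHf.intervalIntegrable _ _) (hLf.intervalIntegrable _ _),
      ← integral_sub hHL hcf]
    exact integral_congr fun s _ => by ring
  rw [hsplit, ← hF]
  unfold cascadeLagrangian
  linear_combination hH + hL

theorem two_model_cascade_foc_sufficient_general
    (f mL mH : ℝ → ℝ) (hf : Continuous f)
    (hf0 : ∀ s ∈ Set.Icc (0:ℝ) 1, 0 ≤ f s)
    (hmL : Continuous mL) (hmH : Continuous mH)
    (cL cH : ℝ)
    (C U : ℝ → ℝ)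
    (hC : ∀ τ, C τ = cL + cH * ∫ s in (0:ℝ)..τ, f s)
    (hU : ∀ τ, U τ = (∫ s in (0:ℝ)..τ, mH s * f s) + ∫ s in τ..(1:ℝ), mL s * f s)
    (hdec : ∀ s' ∈ Set.Icc (0:ℝ) 1, ∀ s'' ∈ Set.Icc (0:ℝ) 1, s'' < s' →
      mH s' - mL s' ≤ mH s'' - mL s'')
    (lam : ℝ)
    (τstar : ℝ) (hτstar : τstar ∈ Set.Ioo (0:ℝ) 1)
    (hfoc : mH τstar - mL τstar = lam * cH) :
    ∀ τ ∈ Set.Icc (0:ℝ) 1, U τ - lam * C τ ≤ U τstar - lam * C τstar := by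
  intro τ hτ
  have hlagr : ∀ t, U t - lam * C t = cascadeLagrangian f mL mH cL cH lam t := fun t => by
    rw [hU, hC, cascadeLagrangian]
  have hanti : AntitoneOn (fun s => mH s - mL s) (Icc 0 1) :=
    antitoneOn_iff_forall_lt.2 fun s hs s' hs' hlt => hdec s' hs' s hs hlt
  rw [hlagr, hlagr, ← sub_nonneg, cascadeLagrangian_sub hf hmL hmH, ← hfoc]
  exact hanti.integral_sub_mul_nonneg hf0 (Ioo_subset_Icc_self hτstar) hτ

/-- If the escalation benefit `mH - mL` is weakly decreasing
on `[0,1]`, `λ ≥ 0`, and `τ* ∈ (0,1)` satisfies the first-order condition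
`mH τ* - mL τ* = λ * cH`, then `τ*` is a global maximizer of the Lagrangian
`τ ↦ U τ - λ C τ` over `[0,1]`. -/
theorem two_model_cascade_foc_sufficient
    (f mL mH : ℝ → ℝ) (hf : Continuous f)
    (hf0 : ∀ s ∈ Set.Icc (0:ℝ) 1, 0 ≤ f s)
    (hfint : (∫ s in (0:ℝ)..1, f s) = 1)
    (hmL : Continuous mL) (hmH : Continuous mH)
    (cL cH : ℝ) (hcL : 0 ≤ cL) (hcH : 0 < cH)
    (C U : ℝ → ℝ)
    (hC : ∀ τ, C τ = cL + cH * ∫ s in (0:ℝ)..τ, f s)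
    (hU : ∀ τ, U τ = (∫ s in (0:ℝ)..τ, mH s * f s) + ∫ s in τ..(1:ℝ), mL s * f s)
    (hdec : ∀ s' ∈ Set.Icc (0:ℝ) 1, ∀ s'' ∈ Set.Icc (0:ℝ) 1, s'' < s' →
      mH s' - mL s' ≤ mH s'' - mL s'')
    (lam : ℝ) (hlam : 0 ≤ lam)
    (τstar : ℝ) (hτstar : τstar ∈ Set.Ioo (0:ℝ) 1)
    (hfoc : mH τstar - mL τstar = lam * cH) :
    ∀ τ ∈ Set.Icc (0:ℝ) 1, U τ - lam * C τ ≤ U τstar - lam * C τstar :=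
  two_model_cascade_foc_sufficient_general f mL mH hf hf0 hmL hmH cL cH C U hC hU hdec lam τstar
    hτstar hfoc
end
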